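/- Let f and g be parabolic germs with f(z) = z + a z^{p+1} + o(z^{p+1}), a ≠ 0, and g(z) = z + b z^{q+1} + o(z^{q+1}), b ≠ 0, where p ≠ q. Then the commutator [f,g] belongs to A_{p+q}, i.e. [f,g](z) = z + c z^{p+q+1} + o(z^{p+q+1}) with c = ab(p−q) ≠ 0. -/

import Mathlib

open Filter Asymptotics

def LocalInv (f f' : ℂ → ℂ) : Prop :=
  (∀ᶠ z in nhds (0:ℂ), f' (f z) = z) ∧ (∀ᶠ z in nhds (0:ℂ), f (f' z) = z)

/-!
Write `f = z + z ^ (p + 1) * F` and `g = z + z ^ (q + 1) * G` with `F`, `G` analytic,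
`F 0 = a`, `G 0 = b`. If `φ = z ^ n * F` and `u = w + w ^ (k + 1) * V` with `k ≥ 1`, then
`φ (u w) - φ w = n F(0) V(0) w ^ (n + k) + o(w ^ (n + k))`. Applied to `f - id` along `g` and to
`g - id` along `f`, this gives `f (g w) - g (f w) = a b ((p + 1) - (q + 1)) w ^ (p + q + 1) + o(…)`.
For `w = f⁻¹ (g⁻¹ z)` one has `g (f w) = z` and `w ~ z`, so
`[f, g] z = z + (f (g w) - g (f w))` has the claimed expansion.
-/

open Topology Finset

section

variable {𝕜 : Type*} [NontriviallyNormedField 𝕜]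

theorem AnalyticAt.exists_eventuallyEq_pow_mul_of_isLittleO {h : 𝕜 → 𝕜} {n : ℕ}
    (hh : AnalyticAt 𝕜 h 0) (ho : h =o[𝓝 0] fun z => z ^ n) :
    ∃ H : 𝕜 → 𝕜, AnalyticAt 𝕜 H 0 ∧ ∀ᶠ z in 𝓝 0, h z = z ^ (n + 1) * H z := by
  suffices ((n + 1 : ℕ) : ℕ∞) ≤ analyticOrderAt h 0 by
    simpa using (natCast_le_analyticOrderAt hh).mp this
  -- otherwise `h = z ^ k * u` with `k ≤ n` and `u 0 ≠ 0`, which is not `o(z ^ n)`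
  by_contra! hlt
  obtain ⟨k, hk⟩ : ∃ k : ℕ, analyticOrderAt h 0 = k :=
    ENat.ne_top_iff_exists.mp (hlt.trans_le le_top).ne |>.imp fun _ => Eq.symm
  have hkn : k ≤ n := by rw [hk] at hlt; norm_cast at hlt; omega
  obtain ⟨u, hu, hu0, hhu⟩ := hh.analyticOrderAt_eq_natCast.mp hk
  have hpow_u : (fun z => z ^ (n - k)) =O[𝓝 0] u :=
    (isBigO_const_of_tendsto ((continuous_pow _).tendsto 0) hu0).trans
      ((isEquivalent_const_iff_tendsto hu0).mpr hu.continuousAt.tendsto).symm.isBigO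
  have hbig : (fun z => z ^ n) =O[𝓝 0] h := by
    refine ((isBigO_refl (fun z : 𝕜 => z ^ k) _).mul hpow_u).congr' ?_ ?_
    · exact .of_eq (funext fun z => by rw [← pow_add, Nat.add_sub_cancel' hkn])
    · filter_upwards [hhu] with z hz
      simpa using hz.symm
  have hfreq : ∃ᶠ z in 𝓝 0, h z ≠ 0 := fun hev =>
    by simp [analyticOrderAt_eq_top.mpr (hev.mono fun _ => not_not.mp)] at hk
  exact isLittleO_irrefl hfreq (ho.trans_isBigO hbig)

theorem AnalyticAt.exists_eventuallyEq_add_pow_mul {f : 𝕜 → 𝕜} {a : 𝕜} {p : ℕ}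
    (hf : AnalyticAt 𝕜 f 0)
    (ho : (fun z => f z - (z + a * z ^ (p + 1))) =o[𝓝 0] fun z => z ^ (p + 1)) :
    ∃ F : 𝕜 → 𝕜, AnalyticAt 𝕜 F 0 ∧ F 0 = a ∧ ∀ᶠ z in 𝓝 0, f z = z + z ^ (p + 1) * F z := by
  obtain ⟨H, hH, hHe⟩ := AnalyticAt.exists_eventuallyEq_pow_mul_of_isLittleO (by fun_prop) ho
  refine ⟨fun z => a + z * H z, by fun_prop, by simp, ?_⟩
  filter_upwards [hHe] with z hz
  linear_combination hz

theorem isEquivalent_id_of_isLittleO_sub_add_mul_pow {f : 𝕜 → 𝕜} {a : 𝕜} {p : ℕ} (hp : p ≠ 0)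
    (hf : (fun z => f z - (z + a * z ^ (p + 1))) =o[𝓝 0] fun z => z ^ (p + 1)) :
    f ~[𝓝 0] id := by
  have hpow : (fun z : 𝕜 => z ^ (p + 1)) =o[𝓝 0] fun z => z := isLittleO_pow_id (by omega)
  exact ((hf.trans hpow).add (hpow.const_mul_left a)).congr
    (fun z => by simp only [Pi.sub_apply, id_eq]; ring) fun _ => rfl

theorem Asymptotics.IsEquivalent.isEquivalent_id_of_rightInverse {β : Type*} [NormedAddCommGroup β]
    {f fi : β → β} {l : Filter β} (hf : f ~[l] id) (hfi : Tendsto fi l l)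
    (hinv : ∀ᶠ z in l, f (fi z) = z) : fi ~[l] id :=
  ((hf.comp_tendsto hfi).congr_left hinv).symm

theorem isLittleO_comp_sub_sub_natCast_mul_pow {φ F u V : 𝕜 → 𝕜} {F' : 𝕜} {n k : ℕ}
    (hk : k ≠ 0) (hF : HasStrictDerivAt F F' 0) (hV : ContinuousAt V 0)
    (hφ : ∀ᶠ z in 𝓝 0, φ z = z ^ n * F z) (hu : ∀ᶠ w in 𝓝 0, u w = w + w ^ (k + 1) * V w) :
    (fun w => φ (u w) - φ w - n * F 0 * V 0 * w ^ (n + k)) =o[𝓝 0] fun w => w ^ (n + k) := by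
  have hu_sub : (fun w => u w - w) =O[𝓝 0] fun w => w ^ (k + 1) := by
    refine ((isBigO_refl (fun w => w ^ (k + 1)) _).mul (hV.tendsto.isBigO_one 𝕜)).congr' ?_
      (.of_eq (by simp))
    filter_upwards [hu] with w hw
    rw [hw, add_sub_cancel_left]
  have hu0 : Tendsto u (𝓝 0) (𝓝 0) := by
    have : ContinuousAt (fun w => w + w ^ (k + 1) * V w) 0 := by fun_prop
    simpa using this.tendsto.congr' (hu.mono fun _ h => h.symm)
  have hS : Tendsto (fun w => ∑ i ∈ range n, (w ^ k * V w + 1) ^ i) (𝓝 0) (𝓝 n) := by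
    have : ContinuousAt (fun w => w ^ k * V w + 1) 0 := by fun_prop
    simpa [hk] using tendsto_finsetSum (range n) fun i _ => this.tendsto.pow i
  have hlead : (fun w => V w * (∑ i ∈ range n, (w ^ k * V w + 1) ^ i) * F (u w)
      - n * F 0 * V 0) =o[𝓝 0] fun _ => (1 : 𝕜) := by
    rw [isLittleO_one_iff, tendsto_sub_nhds_zero_iff,
      show (n : 𝕜) * F 0 * V 0 = V 0 * n * F 0 by ring]
    exact (hV.tendsto.mul hS).mul (hF.hasDerivAt.continuousAt.tendsto.comp hu0)
  have hrem : (fun w => F (u w) - F w) =O[𝓝 0] fun w => w ^ (k + 1) :=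
    (hF.hasStrictFDerivAt.isBigO_sub.comp_tendsto (hu0.prodMk_nhds tendsto_id)).trans hu_sub
  have hsplit : ∀ᶠ w in 𝓝 0, φ (u w) - φ w - n * F 0 * V 0 * w ^ (n + k)
      = w ^ (n + k) * (V w * (∑ i ∈ range n, (w ^ k * V w + 1) ^ i) * F (u w) - n * F 0 * V 0)
        + w ^ n * (F (u w) - F w) := by
    filter_upwards [hφ, hu0.eventually hφ, hu] with w hφw hφuw huw
    -- `u w = w * (v + 1)` with `v = w ^ k * V w`, and `(v + 1) ^ n - 1 = v * ∑ i < n, (v + 1) ^ i`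
    have hgeom := geom_sum_mul_add (w ^ k * V w) n
    rw [hφuw, hφw, show u w = w * (w ^ k * V w + 1) by rw [huw]; ring, mul_pow]
    linear_combination (w ^ n * F (w * (w ^ k * V w + 1))) * hgeom.symm
  have hlead' := (isBigO_refl (fun w => w ^ (n + k)) (𝓝 0)).mul_isLittleO hlead
  simp only [mul_one] at hlead'
  have hrem' := ((isBigO_refl (fun w => w ^ n) (𝓝 0)).mul hrem).trans_isLittleO
    ((isLittleO_pow_pow (by omega : n + k < n + (k + 1))).congr_left fun w => pow_add w n (k + 1))
  exact (hlead'.add hrem').congr' (hsplit.mono fun _ h => h.symm) (.of_eq (by simp))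

theorem isLittleO_comp_sub_comp_sub_mul_pow {f g F G : 𝕜 → 𝕜} {F' G' : 𝕜} {p q : ℕ}
    (hp : p ≠ 0) (hq : q ≠ 0) (hF : HasStrictDerivAt F F' 0) (hG : HasStrictDerivAt G G' 0)
    (hf : ∀ᶠ z in 𝓝 0, f z = z + z ^ (p + 1) * F z)
    (hg : ∀ᶠ z in 𝓝 0, g z = z + z ^ (q + 1) * G z) :
    (fun w => f (g w) - g (f w) - F 0 * G 0 * ((p : 𝕜) - q) * w ^ (p + q + 1))
      =o[𝓝 0] fun w => w ^ (p + q + 1) := by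
  have hf' := isLittleO_comp_sub_sub_natCast_mul_pow (φ := fun z => f z - z) (n := p + 1) hq hF
    hG.hasDerivAt.continuousAt (hf.mono fun z h => by rw [h]; ring) hg
  have hg' := isLittleO_comp_sub_sub_natCast_mul_pow (φ := fun z => g z - z) (n := q + 1) hp hG
    hF.hasDerivAt.continuousAt (hg.mono fun z h => by rw [h]; ring) hf
  rw [show q + 1 + p = p + 1 + q by ring] at hg'
  exact (hf'.sub hg').congr (fun w => by push_cast; ring) fun w => by ring

end

/-- If `f ∈ A_p`, `g ∈ A_q` with `p ≠ q` (nonzero leading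
coefficients `a`, `b`), then the commutator `[f,g] = f ∘ g ∘ f⁻¹ ∘ g⁻¹` belongs
to `A_{p+q}`: it has the form `z + c z^(p+q+1) + o(z^(p+q+1))` with
`c = a b (p - q) ≠ 0`. -/
theorem commutator_in_A_p_plus_q
    (f g fi gi : ℂ → ℂ) (a b : ℂ) (p q : ℕ) (hp : 1 ≤ p) (hq : 1 ≤ q)
    (ha : a ≠ 0) (hb : b ≠ 0) (hpq : p ≠ q)
    (hfa : AnalyticAt ℂ f 0) (hga : AnalyticAt ℂ g 0)
    (hfia : AnalyticAt ℂ fi 0) (hgia : AnalyticAt ℂ gi 0)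
    (hf0 : f 0 = 0) (hg0 : g 0 = 0)
    (hfi : LocalInv f fi) (hgi : LocalInv g gi)
    (hf : (fun z => f z - (z + a * z ^ (p + 1))) =o[nhds 0] fun z => z ^ (p + 1))
    (hg : (fun z => g z - (z + b * z ^ (q + 1))) =o[nhds 0] fun z => z ^ (q + 1)) :
    ∃ c : ℂ, c = a * b * ((p : ℂ) - q) ∧ c ≠ 0 ∧
      (fun z => f (g (fi (gi z))) - (z + c * z ^ (p + q + 1)))
        =o[nhds 0] fun z => z ^ (p + q + 1) := by
  obtain ⟨F, hFa, hF0, hfF⟩ := hfa.exists_eventuallyEq_add_pow_mul hf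
  obtain ⟨G, hGa, hG0, hgG⟩ := hga.exists_eventuallyEq_add_pow_mul hg
  have hp' := Nat.one_le_iff_ne_zero.mp hp
  have hq' := Nat.one_le_iff_ne_zero.mp hq
  have hfi0 : fi 0 = 0 := by simpa [hf0] using hfi.1.self_of_nhds
  have hgi0 : gi 0 = 0 := by simpa [hg0] using hgi.1.self_of_nhds
  have hfi_lim : Tendsto fi (𝓝 0) (𝓝 0) := by simpa [hfi0] using hfia.continuousAt.tendsto
  have hgi_lim : Tendsto gi (𝓝 0) (𝓝 0) := by simpa [hgi0] using hgia.continuousAt.tendsto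
  have hfi_id : fi ~[𝓝 0] id := (isEquivalent_id_of_isLittleO_sub_add_mul_pow hp' hf)
    |>.isEquivalent_id_of_rightInverse hfi_lim hfi.2
  have hgi_id : gi ~[𝓝 0] id := (isEquivalent_id_of_isLittleO_sub_add_mul_pow hq' hg)
    |>.isEquivalent_id_of_rightInverse hgi_lim hgi.2
  have hw : (fun z => fi (gi z)) ~[𝓝 0] id := (hfi_id.comp_tendsto hgi_lim).trans hgi_id
  have hw_pow : (fun z => fi (gi z) ^ (p + q + 1)) ~[𝓝 0] fun z => z ^ (p + q + 1) :=
    hw.pow _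
  have hcomm := ((isLittleO_comp_sub_comp_sub_mul_pow hp' hq' hFa.hasStrictDerivAt
    hGa.hasStrictDerivAt hfF hgG).comp_tendsto (hfi_lim.comp hgi_lim)).trans_isBigO hw_pow.isBigO
  rw [hF0, hG0] at hcomm
  have hinv : ∀ᶠ z in 𝓝 0, g (f (fi (gi z))) = z := by
    filter_upwards [hgi_lim.eventually hfi.2, hgi.2] with z h1 h2
    rw [h1, h2]
  refine ⟨_, rfl, mul_ne_zero (mul_ne_zero ha hb) (sub_ne_zero.mpr (Nat.cast_injective.ne hpq)), ?_⟩
  refine (hcomm.add (hw_pow.const_mul_left (a * b * ((p : ℂ) - q)))).congr'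
    (hinv.mono fun z h => ?_) .rfl
  simp only [Function.comp_apply, Pi.sub_apply, h]
  ring
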